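/- For the ensemble of all [[n,k]] stabilizer codes, identified with classical additive trace-self-orthogonal codes C^⊥ ⊆ F_4^n of size 2^{n-k}, the average weight enumerator satisfies: for each 1 ≤ j ≤ n, the average over all such codes of A_j(C^⊥) = |{c ∈ C^⊥ : wt(c) = j}| equals ((2^{n-k}-1)/(4^n-1)) · C(n,j) · 3^j. -/

import Mathlib

open scoped Classical

/-- The trace inner product `v * w = Tr_{F₄/F₂}(Σᵢ vᵢ conj(wᵢ))` on `F₄ⁿ`,
with `conj x = x²` and `Tr x = x + x²` (valued in the prime subfield of `F₄`). -/
noncomputable def traceIP {n : ℕ} (v w : Fin n → GaloisField 2 2) : GaloisField 2 2 :=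
  (∑ i, v i * (w i)^2) + (∑ i, v i * (w i)^2)^2

/-- An additive (`F₂`-linear) code `C ⊆ F₄ⁿ` is self-orthogonal if `v * w = 0`
for all `v, w ∈ C`. -/
def IsSelfOrthogonal {n : ℕ} (C : Submodule (ZMod 2) (Fin n → GaloisField 2 2)) : Prop :=
  ∀ v ∈ C, ∀ w ∈ C, traceIP v w = 0

/-- The weight enumerator `A_j(C) = |{c ∈ C : wt(c) = j}|`. -/
noncomputable def weightEnum {n : ℕ} (C : Submodule (ZMod 2) (Fin n → GaloisField 2 2))
    (j : ℕ) : ℕ :=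
  Nat.card {v : Fin n → GaloisField 2 2 // v ∈ C ∧ hammingNorm v = j}

noncomputable section AWE

abbrev F4 := GaloisField 2 2

noncomputable instance : Fintype F4 := Fintype.ofFinite _

lemma F4card : Fintype.card F4 = 4 := by
  have := GaloisField.card 2 2 (by norm_num); simpa using this

lemma F4frob (z : F4) : z ^ 4 = z := by
  have := FiniteField.pow_card z; rwa [F4card] at this

lemma F4add_self (a : F4) : a + a = 0 := by
  have h : (2:F4) = 0 := by exact_mod_cast CharP.cast_eq_zero F4 2
  linear_combination a * h

lemma F4sq_cases (a : F4) (h : a ^ 2 = a) : a = 0 ∨ a = 1 := by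
  have h2 : a * (a - 1) = 0 := by linear_combination h
  rcases mul_eq_zero.1 h2 with h | h
  · exact Or.inl h
  · right; linear_combination h

lemma F4add_sq (a b : F4) : (a + b) ^ 2 = a ^ 2 + b ^ 2 := by
  exact add_pow_char (p := 2) a b

lemma F4sum_sq {n : ℕ} (f : Fin n → F4) : (∑ i, f i) ^ 2 = ∑ i, (f i) ^ 2 := by
  have := map_sum (frobenius F4 2) f Finset.univ
  simp only [frobenius_def] at this
  exact this

lemma F4exists_trace_one : ∃ z : F4, z + z ^ 2 = 1 := by
  have hne : ∃ z : F4, z ≠ 0 ∧ z ≠ 1 := by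
    by_contra h
    push_neg at h
    have : Finset.univ ⊆ ({0, 1} : Finset F4) := by
      intro z _
      rcases eq_or_ne z 0 with rfl | hz
      · simp
      · simp [h z hz]
    have hle := Finset.card_le_card this
    have : (4 : ℕ) ≤ 2 := by
      calc (4:ℕ) = Finset.univ.card := by rw [Finset.card_univ, F4card]
        _ ≤ ({0,1} : Finset F4).card := hle
        _ ≤ 2 := Finset.card_insert_le _ _ |>.trans (by simp)
    omega
  obtain ⟨z, hz0, hz1⟩ := hne
  refine ⟨z, ?_⟩
  have hsq : (z + z ^ 2) ^ 2 = z + z ^ 2 := by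
    have h4 := F4frob z
    linear_combination F4add_sq z (z^2) + h4
  rcases F4sq_cases _ hsq with h | h
  · exfalso
    have hzz : z ^ 2 = z := by
      have := F4add_self z
      linear_combination h - this
    rcases F4sq_cases z hzz with h' | h' <;> [exact hz0 h'; exact hz1 h']
  · exact h

variable {n : ℕ}

lemma B_add_left (v v' w : Fin n → F4) :
    traceIP (v + v') w = traceIP v w + traceIP v' w := by
  unfold traceIP
  have h1 : (∑ i, (v + v') i * (w i)^2) = (∑ i, v i * (w i)^2) + (∑ i, v' i * (w i)^2) := by
    rw [← Finset.sum_add_distrib]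
    exact Finset.sum_congr rfl fun i _ => by simp [add_mul]
  rw [h1, F4add_sq]; ring

lemma B_add_right (v w w' : Fin n → F4) :
    traceIP v (w + w') = traceIP v w + traceIP v w' := by
  unfold traceIP
  have h1 : (∑ i, v i * ((w + w') i)^2) = (∑ i, v i * (w i)^2) + (∑ i, v i * (w' i)^2) := by
    rw [← Finset.sum_add_distrib]
    refine Finset.sum_congr rfl fun i _ => ?_
    have : ((w + w') i)^2 = (w i)^2 + (w' i)^2 := by
      simpa using F4add_sq (w i) (w' i)
    rw [this, mul_add]
  rw [h1, F4add_sq]; ring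

lemma B_zero_left (w : Fin n → F4) : traceIP 0 w = 0 := by
  simp [traceIP]

lemma B_zero_right (v : Fin n → F4) : traceIP v 0 = 0 := by
  simp [traceIP]

lemma B_symm (v w : Fin n → F4) : traceIP v w = traceIP w v := by
  unfold traceIP
  set s := ∑ i, v i * (w i)^2 with hs
  set t := ∑ i, w i * (v i)^2 with ht
  have hst : s ^ 2 = t := by
    rw [hs, F4sum_sq]
    refine Finset.sum_congr rfl fun i _ => ?_
    have h4 := F4frob (w i)
    linear_combination (v i)^2 * h4
  have hs4 : s ^ 4 = s := F4frob s
  linear_combination hst - hs4 + (s^2 + t) * hst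

lemma B_idem (v w : Fin n → F4) : (traceIP v w) ^ 2 = traceIP v w := by
  unfold traceIP
  set s := ∑ i, v i * (w i)^2 with hs
  have hs4 : s ^ 4 = s := F4frob s
  linear_combination F4add_sq s (s^2) + hs4

lemma B_self (v : Fin n → F4) : traceIP v v = 0 := by
  unfold traceIP
  set s := ∑ i, v i * (v i)^2 with hs
  have h : s ^ 2 = s := by
    rw [hs, F4sum_sq]
    refine Finset.sum_congr rfl fun i _ => ?_
    have h4 := F4frob (v i)
    linear_combination (v i)^2 * h4
  rw [h]; exact F4add_self s

lemma B_cases (v w : Fin n → F4) : traceIP v w = 0 ∨ traceIP v w = 1 :=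
  F4sq_cases _ (B_idem v w)

lemma B_nondeg {u : Fin n → F4} (hu : u ≠ 0) : ∃ w, traceIP u w = 1 := by
  obtain ⟨i₀, hi₀⟩ : ∃ i, u i ≠ 0 := by
    by_contra h; push_neg at h; exact hu (funext fun i => h i)
  obtain ⟨z, hz⟩ := F4exists_trace_one
  set c : F4 := (z / u i₀) ^ 2 with hc
  refine ⟨fun i => if i = i₀ then c else 0, ?_⟩
  have hsum : (∑ i, u i * ((if i = i₀ then c else 0 : F4))^2) = u i₀ * c^2 := by
    rw [Finset.sum_eq_single i₀]
    · simp
    · intro b _ hb; simp [hb]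
    · intro h; exact absurd (Finset.mem_univ i₀) h
  have hcz : u i₀ * c ^ 2 = z := by
    rw [hc]
    have : ((z / u i₀) ^ 2) ^ 2 = z / u i₀ := by
      have := F4frob (z / u i₀); linear_combination this
    rw [this]
    field_simp
  unfold traceIP
  rw [hsum, hcz]
  exact hz

/-- The symplectic transvection `x ↦ x + B(x,a)·a`. -/
def tvL (a : Fin n → F4) : (Fin n → F4) →ₗ[ZMod 2] (Fin n → F4) where
  toFun x := x + fun i => traceIP x a * a i
  map_add' x y := by
    funext i
    simp only [Pi.add_apply, B_add_left]
    ring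
  map_smul' c x := by
    rcases (by decide : ∀ c : ZMod 2, c = 0 ∨ c = 1) c with rfl | rfl
    · funext i
      simp [B_zero_left]
    · funext i
      simp

lemma tv_eq_of_one {a x : Fin n → F4} (h : traceIP x a = 1) : tvL a x = x + a := by
  funext i; simp [tvL, h]

lemma tv_eq_of_zero {a x : Fin n → F4} (h : traceIP x a = 0) : tvL a x = x := by
  funext i; simp [tvL, h]

lemma tv_invol (a : Fin n → F4) (x : Fin n → F4) : tvL a (tvL a x) = x := by
  rcases B_cases x a with h | h
  · rw [tv_eq_of_zero h, tv_eq_of_zero h]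
  · rw [tv_eq_of_one h]
    have h2 : traceIP (x + a) a = 1 := by
      rw [B_add_left, h, B_self, add_zero]
    rw [tv_eq_of_one h2]
    funext i
    simp [F4add_self, add_assoc]

/-- Transvection as a linear equivalence. -/
def tvE (a : Fin n → F4) : (Fin n → F4) ≃ₗ[ZMod 2] (Fin n → F4) :=
  LinearEquiv.ofLinear (tvL a) (tvL a)
    (LinearMap.ext fun x => tv_invol a x) (LinearMap.ext fun x => tv_invol a x)

lemma tvE_apply (a x : Fin n → F4) : tvE a x = tvL a x := rfl

lemma tv_isom (a x y : Fin n → F4) : traceIP (tvL a x) (tvL a y) = traceIP x y := by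
  have h11 : (1:F4) + 1 = 0 := F4add_self 1
  rcases B_cases x a with hx | hx <;> rcases B_cases y a with hy | hy
  · rw [tv_eq_of_zero hx, tv_eq_of_zero hy]
  · rw [tv_eq_of_zero hx, tv_eq_of_one hy, B_add_right, hx, add_zero]
  · rw [tv_eq_of_one hx, tv_eq_of_zero hy, B_add_left, B_symm a y, hy, add_zero]
  · rw [tv_eq_of_one hx, tv_eq_of_one hy, B_add_left, B_add_right, B_add_right,
      B_self, B_symm a y, hx, hy]
    linear_combination h11

variable (n) in
/-- The number of self-orthogonal codes of size `2^m` containing `u`. -/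
def Ncodes (m : ℕ) (u : Fin n → F4) : ℕ :=
  Nat.card {C : {C : Submodule (ZMod 2) (Fin n → GaloisField 2 2) //
    IsSelfOrthogonal C ∧ Nat.card C = 2 ^ m} // u ∈ C.1}

lemma Ncodes_congr (m : ℕ) (e : (Fin n → F4) ≃ₗ[ZMod 2] (Fin n → F4))
    (he : ∀ x y, traceIP (e x) (e y) = traceIP x y) (u : Fin n → F4) :
    Ncodes n m u = Ncodes n m (e u) := by
  have hmap : ∀ (e : (Fin n → F4) ≃ₗ[ZMod 2] (Fin n → F4)),
      (∀ x y, traceIP (e x) (e y) = traceIP x y) →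
      ∀ C : Submodule (ZMod 2) (Fin n → F4),
      IsSelfOrthogonal C ∧ Nat.card C = 2 ^ m →
      IsSelfOrthogonal (C.map (e : (Fin n → F4) →ₗ[ZMod 2] (Fin n → F4))) ∧
        Nat.card (C.map (e : (Fin n → F4) →ₗ[ZMod 2] (Fin n → F4))) = 2 ^ m := by
    intro e he C ⟨hso, hcard⟩
    constructor
    · rintro v hv w hw
      obtain ⟨x, hx, rfl⟩ := Submodule.mem_map.1 hv
      obtain ⟨y, hy, rfl⟩ := Submodule.mem_map.1 hw
      show traceIP (e x) (e y) = 0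
      rw [he]
      exact hso x hx y hy
    · rw [← hcard]
      exact (Nat.card_congr (e.submoduleMap C).toEquiv).symm
  have hsymm : ∀ x y, traceIP (e.symm x) (e.symm y) = traceIP x y := by
    intro x y
    conv_rhs => rw [← e.apply_symm_apply x, ← e.apply_symm_apply y, he]
  refine Nat.card_congr ?_
  refine Equiv.mk
    (fun C => ⟨⟨C.1.1.map (e : (Fin n → F4) →ₗ[ZMod 2] (Fin n → F4)), hmap e he C.1.1 C.1.2⟩, Submodule.mem_map_of_mem C.2⟩)
    (fun C => ⟨⟨C.1.1.map (e.symm : (Fin n → F4) →ₗ[ZMod 2] (Fin n → F4)), hmap e.symm hsymm C.1.1 C.1.2⟩,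
      Submodule.mem_map.2 ⟨e u, C.2, by simp⟩⟩) ?_ ?_
  · rintro ⟨⟨C, hC⟩, hu⟩
    refine Subtype.ext (Subtype.ext ?_)
    ext x
    simp [Submodule.mem_map_equiv]
  · rintro ⟨⟨C, hC⟩, hu⟩
    refine Subtype.ext (Subtype.ext ?_)
    ext x
    simp [Submodule.mem_map_equiv]

lemma Ncodes_eq_of_B_one (m : ℕ) {u v : Fin n → F4} (h : traceIP u v = 1) :
    Ncodes n m u = Ncodes n m v := by
  have key := Ncodes_congr m (tvE (u + v)) (fun x y => tv_isom (u + v) x y) u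
  have huv : traceIP u (u + v) = 1 := by
    rw [B_add_right, B_self, zero_add, h]
  have : tvE (u + v) u = v := by
    rw [tvE_apply, tv_eq_of_one huv]
    funext i
    simp only [Pi.add_apply]
    have := F4add_self (u i)
    linear_combination this
  rwa [this] at key

lemma Ncodes_const (m : ℕ) {u v : Fin n → F4} (hu : u ≠ 0) (hv : v ≠ 0) :
    Ncodes n m u = Ncodes n m v := by
  obtain ⟨w1, hw1⟩ := B_nondeg hu
  obtain ⟨w2, hw2⟩ := B_nondeg hv
  rcases B_cases u v with h0 | h1
  · rcases B_cases u w2 with h | h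
    · rcases B_cases w1 v with h' | h'
      · have ha : traceIP u (w1 + w2) = 1 := by
          rw [B_add_right, hw1, h, add_zero]
        have hb : traceIP (w1 + w2) v = 1 := by
          rw [B_add_left, h', zero_add, B_symm, hw2]
        exact (Ncodes_eq_of_B_one m ha).trans (Ncodes_eq_of_B_one m hb)
      · exact (Ncodes_eq_of_B_one m hw1).trans (Ncodes_eq_of_B_one m h')
    · have hb : traceIP w2 v = 1 := by rw [B_symm, hw2]
      exact (Ncodes_eq_of_B_one m h).trans (Ncodes_eq_of_B_one m hb)
  · exact Ncodes_eq_of_B_one m h1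

lemma card_F4_ne_zero : Fintype.card {x : F4 // x ≠ 0} = 3 := by
  have h1 : Fintype.card {x : F4 // x = 0} = 1 := Fintype.card_subtype_eq (0 : F4)
  have := Fintype.card_subtype_compl (fun x : F4 => x = 0)
  rw [h1, F4card] at this
  simpa using this

lemma card_fin_lt (m : ℕ) (hm : m ≤ n) :
    (Finset.univ.filter fun i : Fin n => i.val < m).card = m := by
  rw [← Fintype.card_subtype]
  have e : {i : Fin n // i.val < m} ≃ Fin m :=
    { toFun := fun i => ⟨i.1.val, i.2⟩
      invFun := fun i => ⟨⟨i.val, lt_of_lt_of_le i.2 hm⟩, i.2⟩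
      left_inv := fun i => by ext; rfl
      right_inv := fun i => by ext; rfl }
  rw [Fintype.card_congr e, Fintype.card_fin]

lemma hammingNorm_eq (v : Fin n → F4) :
    hammingNorm v = (Finset.univ.filter fun i => v i ≠ 0).card := by
  rw [hammingNorm]

lemma card_supp_eq (s : Finset (Fin n)) :
    (Finset.univ.filter fun v : Fin n → F4 =>
      (Finset.univ.filter fun i => v i ≠ 0) = s).card = 3 ^ s.card := by
  rw [← Fintype.card_subtype]
  have e1 : {v : Fin n → F4 // (Finset.univ.filter fun i => v i ≠ 0) = s} ≃
      {v : Fin n → F4 // ∀ i, v i ≠ 0 ↔ i ∈ s} := by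
    apply Equiv.subtypeEquivRight
    intro v
    rw [Finset.ext_iff]
    constructor
    · intro h i; have := h i; simpa using this
    · intro h i; simp [h i]
  have e2 : {v : Fin n → F4 // ∀ i, v i ≠ 0 ↔ i ∈ s} ≃ (s → {x : F4 // x ≠ 0}) :=
    { toFun := fun v i => ⟨v.1 i.1, (v.2 i.1).2 i.2⟩
      invFun := fun f => ⟨fun i => if h : i ∈ s then (f ⟨i, h⟩).1 else 0, fun i => by
        by_cases h : i ∈ s
        · simp [h, (f ⟨i, h⟩).2]
        · simp [h]⟩
      left_inv := fun v => by
        ext i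
        by_cases h : i ∈ s
        · simp [h]
        · have h0 : v.1 i = 0 := by
            by_contra hne
            exact h ((v.2 i).1 hne)
          simp [h, h0]
      right_inv := fun f => by
        ext i
        simp [i.2] }
  rw [Fintype.card_congr (e1.trans e2), Fintype.card_fun, card_F4_ne_zero,
    Fintype.card_coe]

lemma card_wtj (j : ℕ) :
    (Finset.univ.filter fun v : Fin n → F4 => hammingNorm v = j).card
      = n.choose j * 3 ^ j := by
  rw [Finset.card_eq_sum_card_fiberwise
    (f := fun v : Fin n → F4 => Finset.univ.filter fun i => v i ≠ 0)
    (t := Finset.univ.powersetCard j) ?_]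
  swap
  · intro v hv
    rw [Finset.mem_coe, Finset.mem_filter] at hv
    rw [Finset.mem_coe]; dsimp only
    rw [Finset.mem_powersetCard_univ, ← hammingNorm_eq]
    exact hv.2
  have step : ∀ s ∈ Finset.univ.powersetCard j,
      ((Finset.univ.filter fun v : Fin n → F4 => hammingNorm v = j).filter
        (fun v => (Finset.univ.filter fun i => v i ≠ 0) = s)).card = 3 ^ j := by
    intro s hs
    rw [Finset.mem_powersetCard_univ] at hs
    rw [Finset.filter_filter]
    have : ∀ v : Fin n → F4,
        ((hammingNorm v = j) ∧ (Finset.univ.filter fun i => v i ≠ 0) = s) ↔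
          ((Finset.univ.filter fun i => v i ≠ 0) = s) := by
      intro v
      constructor
      · exact fun h => h.2
      · intro h
        exact ⟨by rw [hammingNorm_eq, h, hs], h⟩
    rw [Finset.filter_congr fun v _ => this v, ← hs, card_supp_eq]
  rw [Finset.sum_congr rfl step, Finset.sum_const, Finset.card_powersetCard,
    Finset.card_univ, Fintype.card_fin, smul_eq_mul]

variable (n) in
/-- The binary code supported on the first `m` coordinates. -/
def binCode (m : ℕ) : Submodule (ZMod 2) (Fin n → F4) where
  carrier := {v | ∀ i : Fin n, (v i = 0 ∨ v i = 1) ∧ (m ≤ i.val → v i = 0)}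
  zero_mem' := by intro i; simp
  add_mem' := by
    intro a b ha hb i
    refine ⟨?_, fun h => ?_⟩
    · rcases (ha i).1 with h1 | h1 <;> rcases (hb i).1 with h2 | h2 <;>
        simp [h1, h2, F4add_self]
    · show a i + b i = 0
      rw [(ha i).2 h, (hb i).2 h, add_zero]
  smul_mem' := by
    intro c x hx
    rcases (by decide : ∀ c : ZMod 2, c = 0 ∨ c = 1) c with rfl | rfl
    · intro i; simp
    · intro i; simpa using hx i

lemma binCode_selfOrth (m : ℕ) : ∀ v ∈ binCode n m, ∀ w ∈ binCode n m, traceIP v w = 0 := by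
  intro v hv w hw
  unfold traceIP
  set s := ∑ i, v i * (w i)^2 with hs
  have h : s ^ 2 = s := by
    rw [hs, F4sum_sq]
    refine Finset.sum_congr rfl fun i _ => ?_
    rcases (hv i).1 with h1 | h1 <;> rcases (hw i).1 with h2 | h2 <;> simp [h1, h2]
  rw [h]; exact F4add_self s

lemma binCode_card (m : ℕ) (hm : m ≤ n) : Nat.card (binCode n m) = 2 ^ m := by
  have e : binCode n m ≃ ({i : Fin n // i.val < m} → Bool) :=
    { toFun := fun v i => if v.1 i.1 = 1 then true else false
      invFun := fun f => ⟨fun i => if h : i.val < m then (if f ⟨i, h⟩ then 1 else 0) else 0, by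
        intro i
        dsimp only
        by_cases h : i.val < m
        · refine ⟨?_, fun hm' => absurd hm' (by omega)⟩
          rw [dif_pos h]
          by_cases hf : f ⟨i, h⟩ <;> simp [hf]
        · rw [dif_neg h]
          exact ⟨Or.inl rfl, fun _ => rfl⟩⟩
      left_inv := fun v => by
        ext i
        by_cases h : i.val < m
        · rcases (v.2 i).1 with h1 | h1 <;> simp [h, h1]
        · simp only [dif_neg h]
          exact ((v.2 i).2 (by omega)).symm
      right_inv := fun f => by
        funext i
        have h : i.1.val < m := i.2
        by_cases hf : f i <;> simp [h, hf] }
  rw [Nat.card_congr e, Nat.card_eq_fintype_card, Fintype.card_fun, Fintype.card_bool,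
    Fintype.card_subtype]
  rw [card_fin_lt m hm]

instance : Finite (Submodule (ZMod 2) (Fin n → GaloisField 2 2)) :=
  Finite.of_injective (fun C => (C : Set (Fin n → GaloisField 2 2))) SetLike.coe_injective

/-- For the ensemble of all additive trace-self-orthogonal codes `C^⊥ ⊆ F₄ⁿ` of size `2^{n-k}`
(underlying the `[[n,k]]` stabilizer codes), the average weight enumerator satisfies, for
`1 ≤ j ≤ n`:  avg `A_j = ((2^{n-k}-1)/(4^n-1)) C(n,j) 3^j`. -/
theorem average_weight_enumerator_stabilizer (n k j : ℕ) (hk : k ≤ n) (hj1 : 1 ≤ j)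
    (hjn : j ≤ n) :
    (∑ᶠ C : {C : Submodule (ZMod 2) (Fin n → GaloisField 2 2) //
          IsSelfOrthogonal C ∧ Nat.card C = 2^(n-k)}, (weightEnum C.1 j : ℚ))
        / (Nat.card {C : Submodule (ZMod 2) (Fin n → GaloisField 2 2) //
          IsSelfOrthogonal C ∧ Nat.card C = 2^(n-k)})
      = (((2:ℚ)^(n-k) - 1) / ((4:ℚ)^n - 1)) * (n.choose j) * 3^j := by
  set St := {C : Submodule (ZMod 2) (Fin n → GaloisField 2 2) //
      IsSelfOrthogonal C ∧ Nat.card C = 2^(n-k)} with hSt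
  letI : Fintype St := Fintype.ofFinite _
  -- the reference vector of weight j
  set v₀ : Fin n → F4 := fun i => if i.val < j then (1:F4) else 0 with hv₀
  have hv₀wt : hammingNorm v₀ = j := by
    rw [hammingNorm_eq]
    have : (Finset.univ.filter fun i : Fin n => v₀ i ≠ 0)
        = Finset.univ.filter fun i : Fin n => i.val < j := by
      refine Finset.filter_congr fun i _ => ?_
      by_cases h : i.val < j <;> simp [hv₀, h]
    rw [this, card_fin_lt j hjn]
  have hv₀ne : v₀ ≠ 0 := by
    intro h
    rw [h, hammingNorm_zero] at hv₀wt
    omega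
  set N₀ := Ncodes n (n-k) v₀ with hN₀
  have hwe : ∀ C : St, weightEnum C.1 j
      = (Finset.univ.filter fun v : Fin n → F4 => v ∈ C.1 ∧ hammingNorm v = j).card := by
    intro C
    rw [weightEnum, Nat.card_eq_fintype_card, Fintype.card_subtype]
  have hN : ∀ v : Fin n → F4, Ncodes n (n-k) v
      = (Finset.univ.filter fun C : St => v ∈ C.1).card := by
    intro v
    rw [Ncodes, Nat.card_eq_fintype_card, Fintype.card_subtype]
  -- Identity A
  have idA : ∑ C : St, weightEnum C.1 j = (n.choose j * 3 ^ j) * N₀ := by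
    calc ∑ C : St, weightEnum C.1 j
        = ∑ C : St, ∑ v : Fin n → F4,
            if v ∈ C.1 ∧ hammingNorm v = j then 1 else 0 := by
          refine Finset.sum_congr rfl fun C _ => ?_
          rw [hwe, Finset.card_filter]
      _ = ∑ v : Fin n → F4, ∑ C : St,
            if v ∈ C.1 ∧ hammingNorm v = j then 1 else 0 := Finset.sum_comm
      _ = ∑ v : Fin n → F4, if hammingNorm v = j then Ncodes n (n-k) v else 0 := by
          refine Finset.sum_congr rfl fun v _ => ?_
          by_cases hv : hammingNorm v = j
          · rw [if_pos hv, hN v, Finset.card_filter]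
            exact Finset.sum_congr rfl fun C _ => by simp [hv]
          · rw [if_neg hv]
            exact Finset.sum_eq_zero fun C _ => by simp [hv]
      _ = ∑ v ∈ Finset.univ.filter (fun v : Fin n → F4 => hammingNorm v = j),
            Ncodes n (n-k) v := (Finset.sum_filter _ _).symm
      _ = ∑ _v ∈ Finset.univ.filter (fun v : Fin n → F4 => hammingNorm v = j), N₀ := by
          refine Finset.sum_congr rfl fun v hv => ?_
          rw [Finset.mem_filter] at hv
          have hvne : v ≠ 0 := by
            intro h
            rw [h, hammingNorm_zero] at hv
            omega
          exact Ncodes_const (n-k) hvne hv₀ne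
      _ = (n.choose j * 3 ^ j) * N₀ := by
          rw [Finset.sum_const, card_wtj, smul_eq_mul]
  -- Identity B
  have cardC : ∀ C : St, (Finset.univ.filter fun v : Fin n → F4 => v ∈ C.1).card
      = 2 ^ (n-k) := by
    rintro ⟨C, hso, hcard⟩
    rw [← Fintype.card_subtype, ← Nat.card_eq_fintype_card]
    exact (Nat.card_congr (Equiv.subtypeEquivRight (q := fun v => v ∈ C)
      fun _ => Iff.rfl)).trans hcard
  have idB : (4 ^ n - 1) * N₀ = Fintype.card St * (2 ^ (n-k) - 1) := by
    have lhs_eq : ∑ v : Fin n → F4, (if v ≠ 0 then Ncodes n (n-k) v else 0)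
        = (4 ^ n - 1) * N₀ := by
      rw [← Finset.sum_filter]
      have h1 : ∑ v ∈ Finset.univ.filter (fun v : Fin n → F4 => v ≠ 0),
          Ncodes n (n-k) v
          = ∑ _v ∈ Finset.univ.filter (fun v : Fin n → F4 => v ≠ 0), N₀ := by
        refine Finset.sum_congr rfl fun v hv => ?_
        rw [Finset.mem_filter] at hv
        exact Ncodes_const (n-k) hv.2 hv₀ne
      rw [h1, Finset.sum_const, smul_eq_mul]
      congr 1
      rw [Finset.filter_ne', Finset.card_erase_of_mem (Finset.mem_univ 0),
        Finset.card_univ, Fintype.card_fun, F4card, Fintype.card_fin]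
    have rhs_eq : ∑ v : Fin n → F4, (if v ≠ 0 then Ncodes n (n-k) v else 0)
        = Fintype.card St * (2 ^ (n-k) - 1) := by
      calc ∑ v : Fin n → F4, (if v ≠ 0 then Ncodes n (n-k) v else 0)
          = ∑ v : Fin n → F4, ∑ C : St, (if v ∈ C.1 ∧ v ≠ 0 then 1 else 0) := by
            refine Finset.sum_congr rfl fun v _ => ?_
            by_cases hv : v ≠ 0
            · rw [if_pos hv, hN v, Finset.card_filter]
              exact Finset.sum_congr rfl fun C _ => by simp [hv]
            · rw [if_neg hv]
              exact (Finset.sum_eq_zero fun C _ => by simp [hv]).symm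
        _ = ∑ C : St, ∑ v : Fin n → F4, (if v ∈ C.1 ∧ v ≠ 0 then 1 else 0) :=
            Finset.sum_comm
        _ = ∑ _C : St, (2 ^ (n-k) - 1) := by
            refine Finset.sum_congr rfl fun C _ => ?_
            rw [← Finset.card_filter]
            have : (Finset.univ.filter fun v : Fin n → F4 => v ∈ C.1 ∧ v ≠ 0)
                = (Finset.univ.filter fun v : Fin n → F4 => v ∈ C.1).erase 0 := by
              ext v
              simp [Finset.mem_erase, and_comm]
            rw [this, Finset.card_erase_of_mem
              (Finset.mem_filter.2 ⟨Finset.mem_univ 0, C.1.zero_mem⟩), cardC]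
        _ = Fintype.card St * (2 ^ (n-k) - 1) := by
            rw [Finset.sum_const, smul_eq_mul, Finset.card_univ]
    rw [← lhs_eq, rhs_eq]
  -- nonemptiness
  have hne : Nonempty St :=
    ⟨⟨binCode n (n-k), binCode_selfOrth (n-k), binCode_card (n-k) (Nat.sub_le n k)⟩⟩
  have hcardSt : (0:ℚ) < (Fintype.card St : ℚ) := by
    exact_mod_cast Fintype.card_pos
  -- casts
  have h4 : (1:ℕ) ≤ 4 ^ n := Nat.one_le_pow _ _ (by norm_num)
  have h2 : (1:ℕ) ≤ 2 ^ (n-k) := Nat.one_le_pow _ _ (by norm_num)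
  have hn1 : 1 ≤ n := le_trans hj1 hjn
  have h4Q : ((4:ℚ) ^ n - 1) ≠ 0 := by
    have : (4:ℚ) ^ n ≥ 4 ^ 1 := by
      apply pow_le_pow_right₀ (by norm_num) hn1
    simp only [pow_one] at this
    intro h
    nlinarith
  have idBQ : ((4:ℚ) ^ n - 1) * (N₀ : ℚ) = (Fintype.card St : ℚ) * ((2:ℚ) ^ (n-k) - 1) := by
    have := congrArg (Nat.cast (R := ℚ)) idB
    push_cast [Nat.cast_sub h4, Nat.cast_sub h2] at this
    convert this using 2 <;> push_cast <;> ring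
  have idAQ : (∑ C : St, (weightEnum C.1 j : ℚ))
      = ((n.choose j : ℚ) * 3 ^ j) * (N₀ : ℚ) := by
    have := congrArg (Nat.cast (R := ℚ)) idA
    push_cast at this
    exact this
  rw [finsum_eq_sum_of_fintype, Nat.card_eq_fintype_card, idAQ]
  rw [div_eq_iff (ne_of_gt hcardSt)]
  field_simp
  linear_combination (n.choose j : ℚ) * idBQ

end AWE
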